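/- Let n, m ∈ ℤ_+ with 2(m+1) ≤ n and let I be a nonempty independent set of C_n^m. If |I| ≥ 2, then γ_gr(C_n^m, I) = n − |I|·m; if |I| = 1, then γ_gr(C_n^m, I) = n − 2m. -/

import Mathlib

namespace GrundyDom

/-- Closed neighborhood N[v]. -/
def cn {V : Type*} (G : SimpleGraph V) (v : V) : Set V := insert v (G.neighborSet v)

/-- Union of closed neighborhoods of the vertices of a list. -/
def cnUnion {V : Type*} (G : SimpleGraph V) (L : List V) : Set V := ⋃ v ∈ L, cn G v

/-- Private neighborhood of `v` with respect to the first `i` entries of `S`: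
`N[v] \ (N[v_1] ∪ ... ∪ N[v_i])`. -/
def PN {V : Type*} (G : SimpleGraph V) (S : List V) (i : ℕ) (v : V) : Set V :=
  cn G v \ cnUnion G (S.take i)

/-- A legal dominating sequence: distinct vertices, dominating set, and every
vertex of the sequence has a nonempty private neighborhood w.r.t. its predecessors. -/
structure IsLegal {V : Type*} (G : SimpleGraph V) (S : List V) : Prop where
  nodup : S.Nodup
  dominates : ∀ v : V, ∃ u ∈ S, v ∈ cn G u
  legal : ∀ i : Fin S.length, (PN G S i.val (S.get i)).Nonempty

/-- The set `I_S` of vertices that footprint themselves in `S`. -/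
def selfFoot {V : Type*} (G : SimpleGraph V) (S : List V) : Set V :=
  {v | ∃ i : Fin S.length, S.get i = v ∧ v ∈ PN G S i.val v}

/-- Grundy domination number: maximum length of a legal dominating sequence. -/
noncomputable def gammaGr {V : Type*} (G : SimpleGraph V) : ℕ :=
  sSup {k | ∃ S : List V, IsLegal G S ∧ S.length = k}

/-- `γ_gr(G, I)`: maximum length of a legal dominating sequence `S` with `I_S = I`. -/
noncomputable def gammaGrOn {V : Type*} (G : SimpleGraph V) (I : Set V) : ℕ :=
  sSup {k | ∃ S : List V, IsLegal G S ∧ selfFoot G S = I ∧ S.length = k}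

/-- `γ_gr^u(G)`: maximum of `γ_gr(G, I)` over independent sets `I` containing `u`. -/
noncomputable def gammaGrVert {V : Type*} (G : SimpleGraph V) (u : V) : ℕ :=
  sSup {k | ∃ I : Set V, (∀ ⦃a⦄, a ∈ I → ∀ ⦃b⦄, b ∈ I → a ≠ b → ¬ G.Adj a b) ∧
    u ∈ I ∧ k = gammaGrOn G I}

/-- Independent set of a graph. -/
def IsIndep {V : Type*} (G : SimpleGraph V) (I : Set V) : Prop :=
  ∀ ⦃u⦄, u ∈ I → ∀ ⦃v⦄, v ∈ I → u ≠ v → ¬ G.Adj u v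

/-- The X-join product `G ↩ 𝓡`: replace each vertex `v` of `G` by the graph `R v`. -/
def XJoin {V : Type*} (G : SimpleGraph V) {W : V → Type*} (R : ∀ v, SimpleGraph (W v)) :
    SimpleGraph (Σ v, W v) where
  Adj x y := G.Adj x.1 y.1 ∨ ∃ h : x.1 = y.1, (R y.1).Adj (h ▸ x.2) y.2
  symm := ⟨by
    rintro ⟨a, xa⟩ ⟨b, yb⟩ (h | ⟨h, hadj⟩)
    · exact Or.inl h.symm
    · dsimp at h hadj
      subst h
      exact Or.inr ⟨rfl, (R a).adj_symm hadj⟩⟩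
  loopless := ⟨by
    rintro ⟨a, xa⟩ (h | ⟨h, hadj⟩)
    · exact G.irrefl h
    · exact (R a).irrefl hadj⟩

/-- The lexicographic product `G ∘ H`. -/
def Lex {V W : Type*} (G : SimpleGraph V) (H : SimpleGraph W) : SimpleGraph (V × W) where
  Adj x y := G.Adj x.1 y.1 ∨ (x.1 = y.1 ∧ H.Adj x.2 y.2)
  symm := ⟨by
    rintro x y (h | ⟨h1, h2⟩)
    · exact Or.inl h.symm
    · exact Or.inr ⟨h1.symm, h2.symm⟩⟩
  loopless := ⟨by
    rintro x (h | ⟨_, h⟩)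
    · exact G.irrefl h
    · exact H.irrefl h⟩

/-- The replacement graph `G_{u ↩ H}`: replace the vertex `u` of `G` by `H`. -/
def Replace {V : Type*} (G : SimpleGraph V) (u : V) {W : Type*} (H : SimpleGraph W) :
    SimpleGraph ({v : V // v ≠ u} ⊕ W) where
  Adj x y :=
    match x, y with
    | Sum.inl a, Sum.inl b => G.Adj a.1 b.1
    | Sum.inl a, Sum.inr _ => G.Adj a.1 u
    | Sum.inr _, Sum.inl b => G.Adj u b.1
    | Sum.inr h1, Sum.inr h2 => H.Adj h1 h2
  symm := ⟨by rintro (a|a) (b|b) h <;> exact h.symm⟩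
  loopless := ⟨by rintro (a|a) h <;> exact h.ne rfl⟩

/-- `C_n^m`: the m-th power of the n-cycle, on vertex set `ZMod n`;
two vertices are adjacent iff their circular distance is between 1 and m. -/
def cyclePow (n m : ℕ) : SimpleGraph (ZMod n) where
  Adj i j := i ≠ j ∧ ∃ k : ℕ, 1 ≤ k ∧ k ≤ m ∧ (j = i + k ∨ i = j + k)
  symm := ⟨by
    rintro i j ⟨hne, k, h1, h2, h3⟩
    exact ⟨hne.symm, k, h1, h2, h3.symm⟩⟩
  loopless := ⟨fun i h => h.1 rfl⟩

/-- `P_n^m`: the m-th power of the n-path, on vertex set `Fin n`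
(vertex `i` represents the `(i+1)`-st vertex of the path);
two vertices adjacent iff their distance is between 1 and m. -/
def pathPow (n m : ℕ) : SimpleGraph (Fin n) where
  Adj i j := i ≠ j ∧ Nat.dist i.val j.val ≤ m
  symm := ⟨by
    rintro i j ⟨hne, hd⟩
    exact ⟨hne.symm, by rwa [Nat.dist_comm]⟩⟩
  loopless := ⟨fun i h => h.1 rfl⟩

end GrundyDom

open GrundyDom Finset

/-!
Encode a partial sequence by the set `U` of vertices it already dominates, and let `e(U)` count
the `x ∈ U` with `x + 1 ∉ U` (for `U ≠ univ`, the number of maximal arcs of `U`). The potential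
`|U| - m·e(U)` grows from `0` to `n`. Playing `v` adds the arc `B = [v - m, v + m]`, which creates
at most one right end, `v + m`, and removes every right end of `U` followed by a vertex of `B \ U`.
Counting runs of new vertices inside `B` shows that the potential rises by at least `1` when
`B ⊄ U`, and by at least `m + 1` when moreover `v ∉ U`, i.e. when `v` footprints itself. Hence
`|S| + m·|I_S| ≤ n`. The first move footprints itself and the last one removes the last right end,
so also `|S| + 2m ≤ n`.

Both bounds are attained. For `I = {u}` play `u, u + 1, …, u + n - 2m - 1`. For
`I = {u_0 < ⋯ < u_k}` (consecutive gaps exceed `m`, also cyclically) play `u_i, u_i + 1, …,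
u_{i+1} - m - 1` for each `i < k`, then `u_0 - 1, u_0 - 2, …, u_k + m + 1`, and finally `u_k`:
apart from the `u_i`, every move dominates exactly one new vertex.
-/

namespace GrundyDom

section Finset

variable {α : Type*} [DecidableEq α] {U B : Finset α}

lemma card_singleton_sdiff (x : α) : #({x} \ U) = if x ∈ U then 0 else 1 := by
  split_ifs with hx
  · rw [sdiff_eq_empty_iff_subset.2 (singleton_subset_iff.2 hx), card_empty]
  · rw [sdiff_eq_self_of_disjoint (disjoint_singleton_left.2 hx), card_singleton]

lemma sdiff_nonempty_of_card_lt (h : #U < #(U ∪ B)) : (B \ U).Nonempty :=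
  sdiff_nonempty.2 fun hB => h.ne (by rw [union_eq_left.2 hB])

end Finset

section Relative

variable {V : Type*} [DecidableEq V] (N : V → Finset V)

/-- `N v` plays the role of the closed neighbourhood `N[v]`, and the sequence is played after the
vertices of `U` are already dominated. -/
def covered (U : Finset V) : List V → Finset V
  | [] => U
  | v :: L => covered (U ∪ N v) L

def LegalFrom : Finset V → List V → Prop
  | _, [] => True
  | U, v :: L => (N v \ U).Nonempty ∧ LegalFrom (U ∪ N v) L

def selfFootFrom : Finset V → List V → Finset V
  | _, [] => ∅
  | U, v :: L => (if v ∈ U then ∅ else {v}) ∪ selfFootFrom (U ∪ N v) L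

structure LegalRun (U : Finset V) (L : List V) (U' F : Finset V) : Prop where
  legalFrom : LegalFrom N U L
  covered_eq : covered N U L = U'
  selfFootFrom_eq : selfFootFrom N U L = F

variable {N} {U : Finset V} {L : List V}

lemma covered_append (U : Finset V) (A B : List V) :
    covered N U (A ++ B) = covered N (covered N U A) B := by
  induction A generalizing U with
  | nil => rfl
  | cons v A ih => exact ih _

lemma legalFrom_append {A B : List V} :
    LegalFrom N U (A ++ B) ↔ LegalFrom N U A ∧ LegalFrom N (covered N U A) B := by
  induction A generalizing U with
  | nil => simp [LegalFrom, covered]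
  | cons v A ih => simp only [List.cons_append, LegalFrom, covered, ih, and_assoc]

lemma selfFootFrom_append (U : Finset V) (A B : List V) :
    selfFootFrom N U (A ++ B) = selfFootFrom N U A ∪ selfFootFrom N (covered N U A) B := by
  induction A generalizing U with
  | nil => simp [selfFootFrom, covered]
  | cons v A ih => simp only [List.cons_append, selfFootFrom, covered, ih, union_assoc]

lemma subset_covered (U : Finset V) (L : List V) : U ⊆ covered N U L := by
  induction L generalizing U with
  | nil => exact subset_rfl
  | cons v L ih => exact subset_union_left.trans (ih _)

lemma LegalFrom.not_subset (hL : LegalFrom N U L) {v : V} (hv : v ∈ L) : ¬ N v ⊆ U := by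
  induction L generalizing U with
  | nil => simp at hv
  | cons w L ih =>
    rcases List.mem_cons.1 hv with rfl | hv
    · exact sdiff_nonempty.1 hL.1
    · exact fun hsub => ih hL.2 hv (hsub.trans subset_union_left)

lemma LegalFrom.nodup (hL : LegalFrom N U L) : L.Nodup := by
  induction L generalizing U with
  | nil => exact List.nodup_nil
  | cons v L ih =>
    exact List.nodup_cons.2 ⟨fun hv => hL.2.not_subset hv subset_union_right, ih hL.2⟩

lemma legalFrom_iff_get :
    LegalFrom N U L ↔ ∀ i : Fin L.length, (N (L.get i) \ covered N U (L.take i)).Nonempty := by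
  induction L generalizing U with
  | nil => simp [LegalFrom]
  | cons v L ih =>
    rw [LegalFrom, ih]
    exact (Fin.forall_fin_succ (P := fun i => (N ((v :: L).get i) \
      covered N U ((v :: L).take i)).Nonempty)).symm

lemma mem_selfFootFrom {v : V} :
    v ∈ selfFootFrom N U L ↔ ∃ i : Fin L.length, L.get i = v ∧ v ∉ covered N U (L.take i) := by
  induction L generalizing U with
  | nil => simp [selfFootFrom]
  | cons w L ih =>
    change _ ↔ ∃ i : Fin (L.length + 1), _
    rw [Fin.exists_fin_succ, selfFootFrom, mem_union, ih]
    rcases eq_or_ne v w with rfl | hvw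
    · split_ifs with hv <;> simp [covered, hv]
    · split_ifs <;> simp [covered, hvw, eq_comm]

namespace LegalRun

lemma nil (U : Finset V) : LegalRun N U [] U ∅ := ⟨trivial, rfl, rfl⟩

lemma single_of_mem {v : V} {U' : Finset V} (hv : v ∈ U) (hnew : (N v \ U).Nonempty)
    (h : U ∪ N v = U') : LegalRun N U [v] U' ∅ :=
  ⟨⟨hnew, trivial⟩, h, by simp [selfFootFrom, hv]⟩

lemma single_of_notMem {v : V} {U' : Finset V} (hv : v ∉ U) (hvN : v ∈ N v)
    (h : U ∪ N v = U') : LegalRun N U [v] U' {v} :=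
  ⟨⟨⟨v, mem_sdiff.2 ⟨hvN, hv⟩⟩, trivial⟩, h, by simp [selfFootFrom, hv]⟩

lemma append {L₁ L₂ : List V} {U' U'' F₁ F₂ : Finset V} (h₁ : LegalRun N U L₁ U' F₁)
    (h₂ : LegalRun N U' L₂ U'' F₂) : LegalRun N U (L₁ ++ L₂) U'' (F₁ ∪ F₂) where
  legalFrom := legalFrom_append.2 ⟨h₁.1, h₁.2 ▸ h₂.1⟩
  covered_eq := by rw [covered_append, h₁.2, h₂.2]
  selfFootFrom_eq := by rw [selfFootFrom_append, h₁.2, h₁.3, h₂.3]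

end LegalRun

lemma LegalFrom.le_potential_covered {Φ : Finset V → ℤ} {k : ℤ} (hk : 0 ≤ k)
    (hstep : ∀ U v, (N v \ U).Nonempty → Φ U + 1 + (if v ∈ U then 0 else k) ≤ Φ (U ∪ N v))
    (hL : LegalFrom N U L) :
    Φ U + L.length + k * #(selfFootFrom N U L) ≤ Φ (covered N U L) := by
  induction L generalizing U with
  | nil => simp [selfFootFrom, covered]
  | cons v L ih =>
    have hrest := ih hL.2
    have hv := hstep U v hL.1
    have hcard : #(selfFootFrom N U (v :: L)) ≤
        (if v ∈ U then 0 else 1) + #(selfFootFrom N (U ∪ N v) L) := by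
      rw [selfFootFrom]
      refine (card_union_le _ _).trans ?_
      split_ifs <;> simp
    rw [covered, List.length_cons]
    have := mul_le_mul_of_nonneg_left (Int.ofNat_le.2 hcard) hk
    split_ifs at hv this <;> push_cast at this ⊢ <;> linarith

end Relative

section Graph

variable {V : Type*} [DecidableEq V] {G : SimpleGraph V} {N : V → Finset V}

lemma coe_covered (hN : ∀ v, (N v : Set V) = cn G v) (U : Finset V) (L : List V) :
    (covered N U L : Set V) = ↑U ∪ cnUnion G L := by
  induction L generalizing U with
  | nil => simp [covered, cnUnion]
  | cons v L ih =>
    rw [covered, ih, coe_union, hN, Set.union_assoc]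
    congr 1
    ext x
    simp [cnUnion]

variable [Fintype V]

lemma isLegal_and_selfFoot_eq_iff (hN : ∀ v, (N v : Set V) = cn G v) (S : List V)
    (I : Finset V) : IsLegal G S ∧ selfFoot G S = I ↔ LegalRun N ∅ S univ I := by
  have hcov : ∀ L : List V, (covered N ∅ L : Set V) = cnUnion G L := fun L => by
    simp [coe_covered hN]
  have hlegal : (∀ i : Fin S.length, (PN G S i (S.get i)).Nonempty) ↔ LegalFrom N ∅ S := by
    simp_rw [legalFrom_iff_get, ← coe_nonempty, coe_sdiff, hcov, hN, PN]
  have hdom : (∀ v, ∃ u ∈ S, v ∈ cn G u) ↔ covered N ∅ S = univ := by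
    simp [eq_univ_iff_forall, ← mem_coe (s := covered N ∅ S), hcov, cnUnion]
  have hfoot : selfFoot G S = selfFootFrom N ∅ S := by
    ext v
    simp [selfFoot, PN, mem_selfFootFrom, ← hcov, cn]
  rw [hfoot, coe_inj]
  exact ⟨fun ⟨h, hI⟩ => ⟨hlegal.1 h.legal, hdom.1 h.dominates, hI⟩,
    fun h => ⟨⟨h.1.nodup, hdom.2 h.2, hlegal.2 h.1⟩, h.3⟩⟩

lemma gammaGrOn_eq_length (hN : ∀ v, (N v : Set V) = cn G v) {I : Finset V} {S : List V}
    (hS : LegalRun N ∅ S univ I) (hmax : ∀ S', LegalRun N ∅ S' univ I → S'.length ≤ S.length) :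
    gammaGrOn G I = S.length := by
  refine IsGreatest.csSup_eq ⟨?_, ?_⟩
  · obtain ⟨hlegal, hfoot⟩ := (isLegal_and_selfFoot_eq_iff hN S I).2 hS
    exact ⟨S, hlegal, hfoot, rfl⟩
  · rintro k ⟨S', hS', hI, rfl⟩
    exact hmax S' ((isLegal_and_selfFoot_eq_iff hN S' I).1 ⟨hS', hI⟩)

end Graph

section Arc

variable {n : ℕ}

def arc (c : ZMod n) (l : ℕ) : Finset (ZMod n) := (range l).image fun j : ℕ => c + j

lemma arc_zero (c : ZMod n) : arc c 0 = ∅ := by simp [arc]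

lemma arc_one (c : ZMod n) : arc c 1 = {c} := by simp [arc]

lemma arc_succ (c : ZMod n) (l : ℕ) : arc c (l + 1) = insert (c + l) (arc c l) := by
  simp [arc, range_add_one, image_insert]

lemma card_arc (c : ZMod n) {l : ℕ} (hl : l ≤ n) : #(arc c l) = l := by
  rw [arc, card_image_of_injOn, card_range]
  intro a ha b hb hab
  have := congrArg ZMod.val (add_left_cancel hab)
  simp only [coe_range, Set.mem_Iio] at ha hb
  rwa [ZMod.val_natCast_of_lt (ha.trans_le hl), ZMod.val_natCast_of_lt (hb.trans_le hl)] at this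

variable [NeZero n] {c x : ZMod n} {l : ℕ}

lemma mem_arc_of_val_sub_lt (h : (x - c).val < l) : x ∈ arc c l :=
  mem_image.2 ⟨(x - c).val, mem_range.2 h, by rw [ZMod.natCast_zmod_val]; ring⟩

lemma mem_arc (hl : l ≤ n) : x ∈ arc c l ↔ (x - c).val < l := by
  refine ⟨fun hx => ?_, mem_arc_of_val_sub_lt⟩
  obtain ⟨j, hj, rfl⟩ := mem_image.1 hx
  rw [mem_range] at hj
  rwa [add_sub_cancel_left, ZMod.val_natCast_of_lt (hj.trans_le hl)]

lemma add_mem_arc {j : ℕ} (hl : l ≤ n) (hj : j < n) : c + j ∈ arc c l ↔ j < l := by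
  rw [mem_arc hl, add_sub_cancel_left, ZMod.val_natCast_of_lt hj]

lemma arc_eq_univ (c : ZMod n) : arc c n = univ :=
  eq_univ_of_forall fun _ => mem_arc_of_val_sub_lt (ZMod.val_lt _)

lemma val_add_natCast {s : ℕ} (a : ZMod n) (hs : s ≤ n) :
    (a + s).val = if a.val + s < n then a.val + s else a.val + s - n := by
  have ha := ZMod.val_lt a
  rw [ZMod.val_add, ZMod.val_natCast, Nat.add_mod_mod]
  split_ifs with h
  · exact Nat.mod_eq_of_lt h
  · rw [Nat.mod_eq_sub_mod (by omega), Nat.mod_eq_of_lt (by omega)]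

lemma arc_union_arc {s M : ℕ} (h₁ : s ≤ l) (h₂ : l ≤ s + M) (h₃ : s + M ≤ n) :
    arc c l ∪ arc (c + s) M = arc c (s + M) := by
  ext x
  have hx : x - c = x - (c + s) + s := by ring
  have ht := ZMod.val_lt (x - (c + (s : ZMod n)))
  rw [mem_union, mem_arc (by omega), mem_arc (by omega), mem_arc h₃, hx,
    val_add_natCast _ (by omega)]
  split_ifs <;> omega

end Arc

section Ball

variable {n m : ℕ} [NeZero n] {u v x : ZMod n}

def ball (m : ℕ) (v : ZMod n) : Finset (ZMod n) := arc (v - m) (2 * m + 1)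

lemma mem_ball (hmn : 2 * m + 1 ≤ n) : u ∈ ball m v ↔ ∃ k ≤ m, u = v + k ∨ v = u + k := by
  constructor
  · intro hu
    rw [ball, mem_arc hmn] at hu
    have hue : u = v - m + (u - (v - m)).val := by rw [ZMod.natCast_zmod_val]; ring
    set j := (u - (v - m)).val
    rcases le_total m j with h | h
    · exact ⟨j - m, by omega, Or.inl (by rw [hue, Nat.cast_sub h]; ring)⟩
    · exact ⟨m - j, Nat.sub_le m j, Or.inr (by rw [hue, Nat.cast_sub h]; ring)⟩
  · rintro ⟨k, hk, rfl | rfl⟩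
    · refine mem_arc_of_val_sub_lt ?_
      rw [show v + k - (v - m) = ((m + k : ℕ) : ZMod n) by push_cast; ring,
        ZMod.val_natCast_of_lt (by omega)]
      omega
    · refine mem_arc_of_val_sub_lt ?_
      rw [show u - (u + k - m) = ((m - k : ℕ) : ZMod n) by push_cast [Nat.cast_sub hk]; ring,
        ZMod.val_natCast_of_lt (by omega)]
      omega

lemma mem_ball_self (hmn : 2 * m + 1 ≤ n) (v : ZMod n) : v ∈ ball m v :=
  (mem_ball hmn).2 ⟨0, Nat.zero_le _, Or.inl (by simp)⟩

lemma coe_ball (hmn : 2 * m + 1 ≤ n) (v : ZMod n) :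
    (ball m v : Set (ZMod n)) = cn (cyclePow n m) v := by
  ext u
  simp only [mem_coe, mem_ball hmn, cn, Set.mem_insert_iff, SimpleGraph.mem_neighborSet, cyclePow]
  constructor
  · rintro ⟨k, hk, hu⟩
    by_cases huv : u = v
    · exact Or.inl huv
    · refine Or.inr ⟨Ne.symm huv, k, Nat.pos_of_ne_zero fun hk0 => huv ?_, hk, hu⟩
      subst hk0
      simpa [eq_comm] using hu
  · rintro (rfl | ⟨-, k, -, hk, hu⟩)
    · exact ⟨0, Nat.zero_le _, Or.inl (by simp)⟩
    · exact ⟨k, hk, hu⟩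

lemma eq_add_of_mem_ball (hmn : 2 * m + 1 ≤ n) (hx : x ∈ ball m v) (hx' : x + 1 ∉ ball m v) :
    x = v + m := by
  rw [ball, mem_arc hmn] at hx
  have hxe : x = v - m + (x - (v - m)).val := by rw [ZMod.natCast_zmod_val]; ring
  set j := (x - (v - m)).val
  have hj : j = 2 * m := by
    by_contra hj
    refine hx' (mem_arc_of_val_sub_lt ?_)
    rw [hxe, show v - m + (j : ZMod n) + 1 - (v - m) = ((j + 1 : ℕ) : ZMod n) by push_cast; ring,
      ZMod.val_natCast_of_lt (by omega)]
    omega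
  rw [hxe, hj]
  push_cast
  ring

omit [NeZero n] in
lemma cyclePow_adj_add {k : ℕ} (x : ZMod n) (hk : 1 ≤ k) (hkm : k ≤ m) (hkn : k < n) :
    (cyclePow n m).Adj x (x + k) := by
  refine ⟨fun h => ?_, k, hk, hkm, Or.inl rfl⟩
  have := congrArg ZMod.val (add_eq_left.1 h.symm)
  rw [ZMod.val_natCast_of_lt hkn, ZMod.val_zero] at this
  omega

lemma IsIndep.add_lt_val_sub {I : Finset (ZMod n)} (hind : IsIndep (cyclePow n m) I)
    (u : ZMod n) {x y : ZMod n} (hx : x ∈ I) (hy : y ∈ I) (hxy : (x - u).val < (y - u).val) :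
    (x - u).val + m < (y - u).val ∧ (y - u).val + m < (x - u).val + n := by
  have hne : x ≠ y := by rintro rfl; exact hxy.false
  have hxu := ZMod.val_lt (x - u)
  have hyu := ZMod.val_lt (y - u)
  have hy' : y = x + ((y - u).val - (x - u).val : ℕ) := by
    rw [Nat.cast_sub hxy.le, ZMod.natCast_zmod_val, ZMod.natCast_zmod_val]
    ring
  have hx' : x = y + ((x - u).val + n - (y - u).val : ℕ) := by
    rw [Nat.cast_sub (by omega), Nat.cast_add, ZMod.natCast_self, ZMod.natCast_zmod_val,
      ZMod.natCast_zmod_val]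
    ring
  constructor
  · by_contra h
    refine hind (mem_coe.2 hx) (mem_coe.2 hy) hne ?_
    rw [hy']
    exact cyclePow_adj_add x (by omega) (by omega) (by omega)
  · by_contra h
    refine hind (mem_coe.2 hy) (mem_coe.2 hx) hne.symm ?_
    rw [hx']
    exact cyclePow_adj_add y (by omega) (by omega) (by omega)

end Ball

section Potential

variable {n m : ℕ} [NeZero n] {U : Finset (ZMod n)} {v : ZMod n}

def rightEnds (U : Finset (ZMod n)) : Finset (ZMod n) := U.filter fun x => x + 1 ∉ U

def entries (U B : Finset (ZMod n)) : Finset (ZMod n) := U.filter fun x => x + 1 ∈ B \ U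

def potential (m : ℕ) (U : Finset (ZMod n)) : ℤ := #U - m * #(rightEnds U)

omit [NeZero n] in
lemma potential_empty : potential m (∅ : Finset (ZMod n)) = 0 := by simp [potential, rightEnds]

lemma potential_univ : potential m (univ : Finset (ZMod n)) = n := by
  simp [potential, rightEnds]

lemma rightEnds_nonempty (hU : U.Nonempty) (hU' : U ≠ univ) : (rightEnds U).Nonempty := by
  obtain ⟨x, hx⟩ := hU
  obtain ⟨y, hy⟩ : ∃ y, y ∉ U := by simpa [eq_univ_iff_forall] using hU'
  by_contra hnone
  have hclosed : ∀ k : ℕ, x + k ∈ U := by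
    intro k
    induction k with
    | zero => simpa using hx
    | succ k ih =>
      by_contra hk
      exact hnone ⟨x + k, mem_filter.2 ⟨ih, by rwa [Nat.cast_succ, ← add_assoc] at hk⟩⟩
  exact hy (by simpa [ZMod.natCast_zmod_val] using hclosed (y - x).val)

lemma potential_add_le_of_ne_univ (hU : U.Nonempty) (hU' : U ≠ univ) :
    potential m U + m + 1 ≤ n := by
  obtain ⟨y, hy⟩ : ∃ y, y ∉ U := by simpa [eq_univ_iff_forall] using hU'
  have hcard : #U < n := by simpa using card_lt_univ_of_notMem hy
  have hends : 1 ≤ #(rightEnds U) := card_pos.2 (rightEnds_nonempty hU hU')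
  have : (m : ℤ) ≤ m * #(rightEnds U) := by
    exact_mod_cast Nat.le_mul_of_pos_right m hends
  unfold potential
  omega

lemma card_rightEnds_union_ball_add_le (hmn : 2 * m + 1 ≤ n) (U : Finset (ZMod n))
    (v : ZMod n) :
    #(rightEnds (U ∪ ball m v)) + #(entries U (ball m v)) ≤
      #(rightEnds U) + #({v + m} \ U) := by
  have hdisj : Disjoint (rightEnds (U ∪ ball m v)) (entries U (ball m v)) := by
    refine disjoint_left.2 fun x hx hx' => ?_
    simp only [rightEnds, entries, mem_filter, mem_union, mem_sdiff] at hx hx'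
    exact hx.2 (Or.inr hx'.2.1)
  have hsub :
      rightEnds (U ∪ ball m v) ∪ entries U (ball m v) ⊆ rightEnds U ∪ ({v + m} \ U) := by
    intro x hx
    simp only [rightEnds, entries, mem_union, mem_filter, mem_sdiff, mem_singleton] at hx ⊢
    rcases hx with ⟨hxU | hxB, hx1⟩ | ⟨hxU, -, hx1⟩
    · exact Or.inl ⟨hxU, fun h => hx1 (Or.inl h)⟩
    · by_cases hxU : x ∈ U
      · exact Or.inl ⟨hxU, fun h => hx1 (Or.inl h)⟩
      · exact Or.inr ⟨eq_add_of_mem_ball hmn hxB fun h => hx1 (Or.inr h), hxU⟩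
    · exact Or.inl ⟨hxU, hx1⟩
  rw [← card_union_of_disjoint hdisj]
  exact (card_le_card hsub).trans (card_union_le _ _)

lemma succ_le_card_or_exists_entry (hmn : 2 * m + 1 ≤ n) {j : ℕ} (hj : j ≤ 2 * m)
    (hD : v - m + j ∈ ball m v \ U) :
    j + 1 ≤ #(ball m v \ U) ∨
      ∃ i < j, v - m + i ∈ entries U (ball m v) ∧ j - i ≤ #(ball m v \ U) := by
  set D := ball m v \ U
  suffices ∀ j ≤ 2 * m, v - m + j ∈ D → arc (v - m : ZMod n) (j + 1) ⊆ D ∨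
      ∃ i < j, v - m + i ∈ entries U (ball m v) ∧
        arc (v - m + (i + 1 : ℕ) : ZMod n) (j - i) ⊆ D by
    rcases this j hj hD with h | ⟨i, hij, hi, h⟩
    · exact Or.inl ((card_arc _ (by omega)).symm.le.trans (card_le_card h))
    · exact Or.inr ⟨i, hij, hi, (card_arc _ (by omega)).symm.le.trans (card_le_card h)⟩
  intro j
  induction j with
  | zero => intro _ h; left; simpa [arc_succ, arc_zero] using h
  | succ j ih =>
    intro hj h
    by_cases hU : v - m + j ∈ U
    · refine Or.inr ⟨j, lt_add_one j,
        mem_filter.2 ⟨hU, by rwa [add_assoc, ← Nat.cast_succ]⟩, ?_⟩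
      simpa [arc_succ, arc_zero] using h
    · have hjD : v - m + j ∈ D := mem_sdiff.2 ⟨(add_mem_arc hmn (by omega)).2 (by omega), hU⟩
      rcases ih (by omega) hjD with h' | ⟨i, hij, hi, h'⟩
      · exact Or.inl (by rw [arc_succ]; exact insert_subset h h')
      · refine Or.inr ⟨i, by omega, hi, ?_⟩
        rw [show j + 1 - i = j - i + 1 by omega, arc_succ]
        refine insert_subset ?_ h'
        convert h using 1
        push_cast [Nat.cast_sub hij.le]
        ring

lemma sub_add_two_mul_mem_ball_sdiff (hmn : 2 * m + 1 ≤ n) (hvm : v + m ∉ U) :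
    v - m + (2 * m : ℕ) ∈ ball m v \ U := by
  refine mem_sdiff.2 ⟨(add_mem_arc hmn (by omega)).2 (by omega), ?_⟩
  rwa [show v - m + ((2 * m : ℕ) : ZMod n) = v + m by push_cast; ring]

lemma one_add_le_card_sdiff_ball (hmn : 2 * m + 1 ≤ n) (hnew : (ball m v \ U).Nonempty) :
    1 + m * #({v + m} \ U) ≤ #(ball m v \ U) + m * #(entries U (ball m v)) := by
  have hD := card_pos.2 hnew
  rw [card_singleton_sdiff]
  split_ifs with hvm
  · omega
  rcases succ_le_card_or_exists_entry hmn le_rfl (sub_add_two_mul_mem_ball_sdiff hmn hvm) with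
    h | ⟨i, -, hi, -⟩
  · nlinarith
  · nlinarith [card_pos.2 ⟨_, hi⟩]

lemma le_card_sdiff_ball_of_notMem (hmn : 2 * m + 1 ≤ n) (hv : v ∉ U) :
    m + 1 + m * #({v + m} \ U) ≤ #(ball m v \ U) + m * #(entries U (ball m v)) := by
  have hvD : v - m + (m : ℕ) ∈ ball m v \ U := by
    rw [sub_add_cancel]
    exact mem_sdiff.2 ⟨mem_ball_self hmn v, hv⟩
  have hD := card_pos.2 ⟨_, hvD⟩
  rw [card_singleton_sdiff]
  split_ifs with hvm
  · rcases succ_le_card_or_exists_entry hmn (by omega) hvD with h | ⟨i, -, hi, -⟩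
    · nlinarith
    · nlinarith [card_pos.2 ⟨_, hi⟩]
  rcases succ_le_card_or_exists_entry hmn le_rfl (sub_add_two_mul_mem_ball_sdiff hmn hvm) with
    h | ⟨i₂, hi₂, hK₂, hD₂⟩
  · nlinarith
  have hK := card_pos.2 ⟨_, hK₂⟩
  by_cases hK1 : #(entries U (ball m v)) ≤ 1
  · rcases succ_le_card_or_exists_entry hmn (by omega) hvD with h | ⟨i₁, hi₁, hK₁, -⟩
    · nlinarith
    -- the single entry point bounds both runs, so the run ending at `v + m` passes through `v`
    have heq : i₁ = i₂ := by
      have := congrArg ZMod.val (add_left_cancel (card_le_one.1 hK1 _ hK₁ _ hK₂))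
      rwa [ZMod.val_natCast_of_lt (by omega), ZMod.val_natCast_of_lt (by omega)] at this
    subst heq
    have : m + 1 ≤ #(ball m v \ U) := by omega
    nlinarith
  · nlinarith

lemma potential_add_le_potential_union_ball (hmn : 2 * m + 1 ≤ n) (U : Finset (ZMod n))
    (v : ZMod n) :
    potential m U + #(ball m v \ U) + m * #(entries U (ball m v)) ≤
      potential m (U ∪ ball m v) + m * #({v + m} \ U) := by
  have hends := card_rightEnds_union_ball_add_le hmn U v
  have hcard : #(U ∪ ball m v) = #U + #(ball m v \ U) := by
    rw [← union_sdiff_self_eq_union, card_union_of_disjoint disjoint_sdiff]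
  unfold potential
  rw [hcard]
  push_cast
  have := mul_le_mul_of_nonneg_left (b := ((#(rightEnds (U ∪ ball m v)) +
    #(entries U (ball m v)) : ℕ) : ℤ)) (Int.ofNat_le.2 hends) (Int.natCast_nonneg m)
  push_cast at this
  linarith

lemma add_one_le_potential_union_ball (hmn : 2 * m + 1 ≤ n) (hnew : (ball m v \ U).Nonempty) :
    potential m U + 1 + (if v ∈ U then 0 else (m : ℤ)) ≤ potential m (U ∪ ball m v) := by
  have h := potential_add_le_potential_union_ball hmn U v
  split_ifs with hv
  · have := one_add_le_card_sdiff_ball hmn hnew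
    zify at this
    linarith
  · have := le_card_sdiff_ball_of_notMem hmn hv
    zify at this
    linarith

lemma LegalRun.length_add_mul_card_le (hmn : 2 * m + 1 ≤ n) {S : List (ZMod n)}
    {F : Finset (ZMod n)}
    (hS : LegalRun (ball m) ∅ S univ F) : S.length + m * #F ≤ n := by
  have := hS.legalFrom.le_potential_covered (Nat.cast_nonneg m) fun _ _ hnew =>
    add_one_le_potential_union_ball hmn hnew
  rw [hS.covered_eq, hS.selfFootFrom_eq, potential_univ, potential_empty] at this
  zify
  linarith

lemma LegalRun.length_add_two_mul_le (hmn : 2 * m + 2 ≤ n) {S : List (ZMod n)}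
    {F : Finset (ZMod n)}
    (hS : LegalRun (ball m) ∅ S univ F) : S.length + 2 * m ≤ n := by
  have hball : ∀ z : ZMod n, ball m z ≠ univ := fun z h => by
    have := congrArg card h
    rw [ball, card_arc _ (by omega), card_univ, ZMod.card] at this
    omega
  obtain ⟨A, z, rfl⟩ : ∃ A z, S = A ++ [z] := by
    rcases List.eq_nil_or_concat S with rfl | ⟨A, z, rfl⟩
    · have := congrArg card hS.covered_eq
      simp only [covered, card_empty, card_univ, ZMod.card] at this
      omega
    · exact ⟨A, z, List.concat_eq_append⟩
  obtain ⟨hA, hz, -⟩ := legalFrom_append.1 hS.legalFrom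
  obtain ⟨v, A, rfl⟩ : ∃ v A', A = v :: A' := by
    rcases A with _ | ⟨v, A⟩
    · exact absurd (by simpa [covered_append, covered] using hS.covered_eq) (hball z)
    · exact ⟨v, A, rfl⟩
  have hpot := hA.le_potential_covered (Nat.cast_nonneg m) fun _ _ hnew =>
    add_one_le_potential_union_ball (by omega) hnew
  have hF : m ≤ m * #(selfFootFrom (ball m) ∅ (v :: A)) :=
    Nat.le_mul_of_pos_right m (card_pos.2 ⟨v, by simp [selfFootFrom]⟩)
  have hU : (covered (ball m) ∅ (v :: A)).Nonempty :=
    ⟨v, subset_covered _ A (by simpa using mem_ball_self (by omega) v)⟩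
  have hU' : covered (ball m) ∅ (v :: A) ≠ univ := fun h => by
    obtain ⟨x, hx⟩ := hz
    simp [h] at hx
  have := potential_add_le_of_ne_univ (m := m) hU hU'
  rw [potential_empty] at hpot
  simp only [List.length_append, List.length_cons, List.length_nil] at hpot ⊢
  zify at hF ⊢
  push_cast at hpot
  linarith

end Potential

section Construction

variable {n m : ℕ} [NeZero n] {c : ZMod n}

lemma legalRun_selfFootStep {ℓ s : ℕ} (h₁ : s ≤ ℓ) (h₂ : ℓ ≤ s + m) (h₃ : s + 2 * m + 1 ≤ n) :
    LegalRun (ball m) (arc c ℓ) [c + (s + m : ℕ)] (arc c (s + 2 * m + 1)) {c + (s + m : ℕ)} := by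
  refine LegalRun.single_of_notMem ?_ (mem_ball_self (by omega) _) ?_
  · rw [add_mem_arc (by omega) (by omega)]
    omega
  · rw [ball, show c + ((s + m : ℕ) : ZMod n) - m = c + s by push_cast; ring,
      arc_union_arc h₁ (by omega) (by omega)]
    ring_nf

lemma legalRun_rightStep (hm : 1 ≤ m) {s : ℕ} (h : s + 2 * m + 1 ≤ n) :
    LegalRun (ball m) (arc c (s + 2 * m)) [c + (s + m : ℕ)] (arc c (s + 2 * m + 1)) ∅ := by
  have hunion : arc c (s + 2 * m) ∪ ball m (c + (s + m : ℕ)) = arc c (s + 2 * m + 1) := by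
    rw [ball, show c + ((s + m : ℕ) : ZMod n) - m = c + s by push_cast; ring,
      arc_union_arc (by omega) (by omega) (by omega)]
    ring_nf
  refine LegalRun.single_of_mem ?_ (sdiff_nonempty_of_card_lt ?_) hunion
  · rw [add_mem_arc (by omega) (by omega)]
    omega
  · rw [hunion, card_arc _ (by omega), card_arc _ (by omega)]
    omega

lemma legalRun_leftStep (hm : 1 ≤ m) {ℓ : ℕ} (h₁ : 2 * m ≤ ℓ) (h₂ : ℓ < n) :
    LegalRun (ball m) (arc c ℓ) [c - 1 + m] (arc (c - 1) (ℓ + 1)) ∅ := by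
  have hunion : arc c ℓ ∪ ball m (c - 1 + m) = arc (c - 1) (ℓ + 1) := by
    have := arc_union_arc (c := c - 1) (s := 1) (l := 2 * m + 1) (M := ℓ) (by omega) (by omega)
      (by omega)
    rw [Nat.cast_one, sub_add_cancel, add_comm 1 ℓ] at this
    rw [ball, add_sub_cancel_right, union_comm, this]
  refine LegalRun.single_of_mem ?_ (sdiff_nonempty_of_card_lt ?_) hunion
  · rw [show c - 1 + (m : ZMod n) = c + (m - 1 : ℕ) by push_cast [Nat.cast_sub hm]; ring,
      add_mem_arc (by omega) (by omega)]
    omega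
  · rw [hunion, card_arc _ (by omega), card_arc _ (by omega)]
    omega

lemma legalRun_lastStep (hmn : 2 * m + 1 ≤ n) (x : ZMod n) :
    LegalRun (ball m) (arc (x + 1) (n - 1)) [x] univ {x} := by
  have hx : x = x + 1 + (n - 1 : ℕ) := by
    push_cast [Nat.cast_sub (NeZero.one_le : 1 ≤ n)]
    rw [ZMod.natCast_self]
    ring
  refine LegalRun.single_of_notMem ?_ (mem_ball_self hmn x) (eq_univ_of_forall fun y => ?_)
  · have : x + 1 + ((n - 1 : ℕ) : ZMod n) ∉ arc (x + 1) (n - 1) := by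
      rw [add_mem_arc (by omega) (by omega)]
      omega
    rwa [← hx] at this
  · have := arc_union_arc (c := x + 1) (l := n - 1) (s := n - 1) (M := 1) le_rfl (by omega)
      (by omega)
    rw [arc_one, ← hx, Nat.sub_add_cancel NeZero.one_le, arc_eq_univ] at this
    have hy : y ∈ arc (x + 1) (n - 1) ∪ {x} := by rw [this]; exact mem_univ y
    exact (union_subset_union_right (singleton_subset_iff.2 (mem_ball_self hmn x))) hy

lemma exists_legalRun_right (hm : 1 ≤ m) (c : ZMod n) (b : ℕ) :
    ∀ s, s + 2 * m + b ≤ n →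
      ∃ L, LegalRun (ball m) (arc c (s + 2 * m)) L (arc c (s + 2 * m + b)) ∅ ∧ L.length = b := by
  induction b with
  | zero => exact fun s _ => ⟨[], LegalRun.nil _, rfl⟩
  | succ b ih =>
    intro s hs
    obtain ⟨L, hL, hlen⟩ := ih (s + 1) (by omega)
    rw [show s + 1 + 2 * m = s + 2 * m + 1 by omega, show s + 2 * m + 1 + b = s + 2 * m + (b + 1)
      by omega] at hL
    exact ⟨_, by simpa using (legalRun_rightStep hm (by omega)).append hL, by simp [hlen]⟩

lemma exists_legalRun_left (hm : 1 ≤ m) (b : ℕ) :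
    ∀ (c : ZMod n) ℓ, 2 * m ≤ ℓ → ℓ + b ≤ n →
      ∃ L, LegalRun (ball m) (arc c ℓ) L (arc (c - b) (ℓ + b)) ∅ ∧ L.length = b := by
  induction b with
  | zero => exact fun c ℓ _ _ => ⟨[], by simpa using LegalRun.nil _, rfl⟩
  | succ b ih =>
    intro c ℓ hℓ hb
    obtain ⟨L, hL, hlen⟩ := ih (c - 1) (ℓ + 1) (by omega) (by omega)
    rw [show c - 1 - (b : ZMod n) = c - (b + 1 : ℕ) by push_cast; ring,
      show ℓ + 1 + b = ℓ + (b + 1) by omega] at hL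
    exact ⟨_, by simpa using (legalRun_leftStep hm hℓ (by omega)).append hL, by simp [hlen]⟩

lemma exists_legalRun_segment (hm : 1 ≤ m) {ℓ s t : ℕ} (h₁ : s ≤ ℓ) (h₂ : ℓ ≤ s + m)
    (h₃ : s + 2 * m + 1 ≤ t) (h₄ : t ≤ n) :
    ∃ L, LegalRun (ball m) (arc c ℓ) L (arc c t) {c + (s + m : ℕ)} ∧ L.length + s + 2 * m = t := by
  obtain ⟨L, hL, hlen⟩ := exists_legalRun_right hm c (t - (s + 2 * m + 1)) (s + 1) (by omega)
  rw [show s + 1 + 2 * m = s + 2 * m + 1 by omega,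
    show s + 2 * m + 1 + (t - (s + 2 * m + 1)) = t by omega] at hL
  exact ⟨_, by simpa using (legalRun_selfFootStep h₁ h₂ (by omega)).append hL, by simp; omega⟩

lemma exists_legalRun_forward (hm : 1 ≤ m) (u : ZMod n) (J : Finset ℕ) :
    0 ∈ J → (∀ x ∈ J, ∀ y ∈ J, x < y → x + m < y) → ∀ N, (∀ x ∈ J, x + m < N) → N + m ≤ n →
      ∃ L, LegalRun (ball m) ∅ L (arc (u - m : ZMod n) (N + m))
        (J.image fun z : ℕ => u + (z : ZMod n)) ∧ L.length + #J * m = N := by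
  induction J using Finset.induction_on_max with
  | empty => simp
  | insert a J hlt ih =>
    intro h0 hgap N hN hNn
    have hmax : ∀ x ∈ J, x + m < a :=
      fun x hx => hgap x (mem_insert_of_mem hx) a (mem_insert_self a J) (hlt x hx)
    have haJ : a ∉ J := fun ha => (hlt a ha).false
    rcases J.eq_empty_or_nonempty with rfl | ⟨x, hx⟩
    · obtain rfl : a = 0 := by simpa [eq_comm] using h0
      obtain ⟨L, hL, hlen⟩ := exists_legalRun_segment (c := (u - m : ZMod n)) hm le_rfl
        (Nat.zero_le _) (by have := hN 0 (mem_singleton_self 0); omega) hNn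
      rw [arc_zero] at hL
      exact ⟨L, by simpa using hL, by simp; omega⟩
    · have h0J : 0 ∈ J := by
        rcases mem_insert.1 h0 with h | h
        · exact absurd (h ▸ hlt x hx) (Nat.not_lt_zero x)
        · exact h
      obtain ⟨L₁, hL₁, hlen₁⟩ := ih h0J
        (fun x hx y hy => hgap x (mem_insert_of_mem hx) y (mem_insert_of_mem hy)) a hmax
        (by have := hN a (mem_insert_self a J); omega)
      obtain ⟨L₂, hL₂, hlen₂⟩ := exists_legalRun_segment (c := (u - m : ZMod n)) (ℓ := a + m)
        (s := a) hm (Nat.le_add_right a m) le_rfl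
        (by have := hN a (mem_insert_self a J); omega) hNn
      refine ⟨L₁ ++ L₂, ?_, ?_⟩
      · convert hL₁.append hL₂ using 1
        rw [image_insert, insert_eq, union_comm]
        congr 2
        push_cast
        ring
      · rw [card_insert_of_notMem haJ, List.length_append, add_mul]
        omega

lemma exists_legalRun_singleton (hm : 1 ≤ m) (hmn : 2 * m + 1 ≤ n) (u : ZMod n) :
    ∃ S, LegalRun (ball m) ∅ S univ {u} ∧ S.length + 2 * m = n := by
  obtain ⟨S, hS, hlen⟩ := exists_legalRun_segment (c := (u - m : ZMod n)) (ℓ := 0) (s := 0) hm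
    le_rfl (Nat.zero_le _) (by omega) le_rfl
  rw [arc_zero, arc_eq_univ] at hS
  exact ⟨S, by simpa using hS, by omega⟩

lemma exists_legalRun_of_offsets (hm : 1 ≤ m) (hmn : 2 * m + 2 ≤ n) (u : ZMod n)
    {J : Finset ℕ} (h0 : 0 ∈ J) (hJ : 2 ≤ #J)
    (hgap : ∀ p ∈ J, ∀ q ∈ J, p < q → p + m < q ∧ q + m < p + n) :
    ∃ S, LegalRun (ball m) ∅ S univ (J.image fun z : ℕ => u + (z : ZMod n)) ∧
      S.length + #J * m = n := by
  set z := J.max' ⟨0, h0⟩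
  have hz : z ∈ J := max'_mem _ _
  have hlt : ∀ p ∈ J.erase z, p < z := fun p hp =>
    (le_max' J p (mem_of_mem_erase hp)).lt_of_ne (ne_of_mem_erase hp)
  have hz0 : 0 < z := by
    obtain ⟨p, hp, hp0⟩ := exists_mem_ne (by omega : 1 < #J) 0
    exact (Nat.pos_of_ne_zero hp0).trans_le (le_max' J p hp)
  obtain ⟨hzm, hzn⟩ := hgap 0 h0 z hz hz0
  obtain ⟨L₁, hL₁, hlen₁⟩ := exists_legalRun_forward hm u (J.erase z) (mem_erase.2 ⟨hz0.ne, h0⟩)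
    (fun p hp q hq hpq => (hgap p (mem_of_mem_erase hp) q (mem_of_mem_erase hq) hpq).1) z
    (fun p hp => (hgap p (mem_of_mem_erase hp) z hz (hlt p hp)).1) (by omega)
  obtain ⟨L₂, hL₂, hlen₂⟩ := exists_legalRun_left hm (n - z - m - 1) (u - m : ZMod n) (z + m)
    (by omega) (by omega)
  rw [show u - m - ((n - z - m - 1 : ℕ) : ZMod n) = u + z + 1 by
      rw [show n - z - m - 1 = n - (z + m + 1) by omega, Nat.cast_sub (by omega),
        ZMod.natCast_self]
      push_cast
      ring,
    show z + m + (n - z - m - 1) = n - 1 by omega] at hL₂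
  refine ⟨L₁ ++ L₂ ++ [u + z], ?_, ?_⟩
  · convert (hL₁.append hL₂).append (legalRun_lastStep (by omega) _) using 1
    rw [union_empty, ← image_singleton (fun z : ℕ => u + (z : ZMod n)), ← image_union,
      union_comm, ← insert_eq, insert_erase hz]
  · rw [← card_erase_add_one hz]
    simp only [List.length_append, List.length_cons, List.length_nil, add_mul, one_mul]
    omega

lemma exists_legalRun_of_two_le_card (hm : 1 ≤ m) (hmn : 2 * m + 2 ≤ n) {I : Finset (ZMod n)}
    (hind : IsIndep (cyclePow n m) I) (hI : 2 ≤ #I) :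
    ∃ S, LegalRun (ball m) ∅ S univ I ∧ S.length + #I * m = n := by
  obtain ⟨u, hu⟩ := card_pos.1 (by omega : 0 < #I)
  set J := I.image fun x => (x - u).val
  have hJI : J.image (fun z : ℕ => u + (z : ZMod n)) = I := by
    rw [image_image]
    convert image_id (s := I)
    ext x
    simp
  have hcard : #J = #I := card_image_of_injective _ fun x y h => by
    simpa using ZMod.val_injective n h
  have hgap : ∀ p ∈ J, ∀ q ∈ J, p < q → p + m < q ∧ q + m < p + n := by
    simp only [J, mem_image]
    rintro _ ⟨x, hx, rfl⟩ _ ⟨y, hy, rfl⟩ hxy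
    exact hind.add_lt_val_sub u hx hy hxy
  obtain ⟨S, hS, hlen⟩ :=
    exists_legalRun_of_offsets hm hmn u (mem_image.2 ⟨u, hu, by simp⟩) (hcard ▸ hI) hgap
  exact ⟨S, hJI ▸ hS, hcard ▸ hlen⟩

end Construction

theorem gammaGrOn_cyclePow_add_max_mul {n m : ℕ} [NeZero n] (hm : 1 ≤ m)
    (hmn : 2 * m + 2 ≤ n) {I : Finset (ZMod n)} (hI : I.Nonempty)
    (hind : IsIndep (cyclePow n m) I) :
    gammaGrOn (cyclePow n m) I + max #I 2 * m = n := by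
  obtain ⟨S, hS, hlen⟩ : ∃ S, LegalRun (ball m) ∅ S univ I ∧ S.length + max #I 2 * m = n := by
    rcases le_or_gt 2 #I with h | h
    · rw [max_eq_left h]
      exact exists_legalRun_of_two_le_card hm hmn hind h
    · obtain ⟨u, rfl⟩ := card_eq_one.1 (by have := hI.card_pos; omega : #I = 1)
      simpa using exists_legalRun_singleton hm (by omega : 2 * m + 1 ≤ n) u
  rw [gammaGrOn_eq_length (coe_ball (by omega)) hS fun S' hS' => ?_, hlen]
  have h₁ := hS'.length_add_mul_card_le (by omega)
  have h₂ := hS'.length_add_two_mul_le hmn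
  rcases le_total #I 2 with h | h
  · rw [max_eq_right h] at hlen
    omega
  · rw [max_eq_left h] at hlen
    rw [mul_comm] at h₁
    omega

end GrundyDom

/-- for a nonempty independent set `I` of `C_n^m` (with `2(m+1) ≤ n`),
`γ_gr(C_n^m, I) = n - |I|·m` if `|I| ≥ 2` and `γ_gr(C_n^m, I) = n - 2m` if `|I| = 1`. -/
theorem stmt6 (n m : ℕ) (hm : 1 ≤ m) (hn : 2 * (m + 1) ≤ n)
    (I : Finset (ZMod n)) (hne : I.Nonempty) (hind : IsIndep (cyclePow n m) ↑I) :
    (2 ≤ I.card → (gammaGrOn (cyclePow n m) ↑I : ℤ) = (n : ℤ) - I.card * m) ∧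
    (I.card = 1 → (gammaGrOn (cyclePow n m) ↑I : ℤ) = (n : ℤ) - 2 * m) := by
  have : NeZero n := ⟨by omega⟩
  have key := gammaGrOn_cyclePow_add_max_mul hm (by omega) hne hind
  refine ⟨fun h => ?_, fun h => ?_⟩
  · rw [max_eq_left h] at key
    omega
  · rw [h, max_eq_right one_le_two] at key
    omega
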